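/- arXiv:1611.01370 — 4 statements merged into one kernel-verified Lean document; each statement's English description precedes it below -/
import Mathlib

section
/- The Durbin-Levinson map B sending partial autocorrelations (ζ₁,…,ζ_p) to AR coefficients (φ₁,…,φ_p), defined recursively by φ_{j,k+1} = φ_{j,k} − ζ_{k+1} φ_{k+1−j,k} for j = 1,…,k with φ_{k,k} = ζ_k and φ_j = φ_{j,p}, is injective on the open cube (−1,1)^p. -/
/-- The Durbin-Levinson recursion: `levinson ζ k j` is `φ_{j,k}`, where
`φ_{k,k} = ζ_k` and `φ_{j,k+1} = φ_{j,k} - ζ_{k+1} φ_{k+1-j,k}` for `j ≤ k`. -/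
def levinson (ζ : ℕ → ℝ) : ℕ → ℕ → ℝ
  | 0, _ => 0
  | k + 1, j =>
      if j = k + 1 then ζ (k + 1)
      else levinson ζ k j - ζ (k + 1) * levinson ζ k (k + 1 - j)

lemma levinson_step (ζ η : ℕ → ℝ) (k : ℕ)
    (hζ : ζ (k+1) ∈ Set.Ioo (-1 : ℝ) 1) (hη : η (k+1) ∈ Set.Ioo (-1 : ℝ) 1)
    (H : ∀ j, 1 ≤ j → j ≤ k+1 → levinson ζ (k+1) j = levinson η (k+1) j) :
    ζ (k+1) = η (k+1) ∧ ∀ j, 1 ≤ j → j ≤ k → levinson ζ k j = levinson η k j := by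
  have hz : levinson ζ (k+1) (k+1) = ζ (k+1) := by simp [levinson]
  have hz' : levinson η (k+1) (k+1) = η (k+1) := by simp [levinson]
  have hee : ζ (k+1) = η (k+1) := by
    have := H (k+1) (by omega) le_rfl
    rwa [hz, hz'] at this
  set e : ℝ := ζ (k+1) with he
  have he2 : e^2 < 1 := by nlinarith [hζ.1, hζ.2]
  refine ⟨hee, fun j h1 h2 => ?_⟩
  have E1 := H j h1 (by omega)
  have E2 := H (k+1-j) (by omega) (by omega)
  simp only [levinson, if_neg (show j ≠ k+1 by omega),
    if_neg (show k+1-j ≠ k+1 by omega)] at E1 E2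
  rw [show k+1-(k+1-j) = j by omega] at E2
  rw [← hee] at E1 E2
  set a : ℝ := levinson ζ k j - levinson η k j with ha
  set b : ℝ := levinson ζ k (k+1-j) - levinson η k (k+1-j) with hb
  have hab : a = e * b := by rw [ha, hb]; linarith [E1]
  have hba : b = e * a := by rw [hb, ha]; linarith [E2]
  have key : a = e^2 * a := by linear_combination hab + e * hba
  have h0 : a * (1 - e^2) = 0 := by linear_combination key
  rcases mul_eq_zero.mp h0 with h | h
  · have : a = 0 := h
    rw [ha] at this; linarith
  · nlinarith
  
/-- The Durbin-Levinson map `B : (ζ₁,…,ζ_p) ↦ (φ₁,…,φ_p)`, `φ_j = φ_{j,p}`,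
is injective on the open cube `(-1,1)^p`. -/
theorem levinson_injOn_cube (p : ℕ) (ζ η : ℕ → ℝ)
    (hζ : ∀ i, 1 ≤ i → i ≤ p → ζ i ∈ Set.Ioo (-1 : ℝ) 1)
    (hη : ∀ i, 1 ≤ i → i ≤ p → η i ∈ Set.Ioo (-1 : ℝ) 1)
    (heq : ∀ j, 1 ≤ j → j ≤ p → levinson ζ p j = levinson η p j) :
    ∀ i, 1 ≤ i → i ≤ p → ζ i = η i := by
  have main : ∀ m, m ≤ p →
      (∀ j, 1 ≤ j → j ≤ p - m → levinson ζ (p - m) j = levinson η (p - m) j) ∧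
      (∀ i, p - m < i → i ≤ p → ζ i = η i) := by
    intro m
    induction m with
    | zero =>
      intro _
      refine ⟨fun j h1 h2 => heq j h1 (by omega), fun i hi hi' => by omega⟩
    | succ m ih =>
      intro hm
      obtain ⟨IH1, IH2⟩ := ih (by omega)
      set k := p - (m+1) with hk
      have hpm : p - m = k + 1 := by omega
      rw [hpm] at IH1
      obtain ⟨hzeta, hlev⟩ := levinson_step ζ η k
        (hζ (k+1) (by omega) (by omega)) (hη (k+1) (by omega) (by omega)) IH1
      refine ⟨hlev, fun i hi hi' => ?_⟩
      rcases eq_or_lt_of_le (show k + 1 ≤ i by omega) with h | h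
      · rw [← h]; exact hzeta
      · exact IH2 i (by omega) hi'
  intro i h1 h2
  exact (main p le_rfl).2 i (by omega) h2
end

section
/- For a causal stationary AR(p) process with partial autocorrelations ζ₁,…,ζ_p ∈ (−1,1) and innovation variance σ_a², the determinant of the normalized covariance matrix Γ_p/σ_a² equals ∏_{i=1}^p (1 − ζ_i²)^{−i}. -/
open Finset

lemma levinson_succ_self (ζ : ℕ → ℝ) (k : ℕ) : levinson ζ (k+1) (k+1) = ζ (k+1) := by
  simp [levinson]

lemma levinson_succ_of_le (ζ : ℕ → ℝ) {k i : ℕ} (h : i ≤ k) :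
    levinson ζ (k+1) i = levinson ζ k i - ζ (k+1) * levinson ζ k (k+1-i) := by
  rw [levinson, if_neg (by omega)]

lemma sum_Icc_reflect (k : ℕ) (F : ℕ → ℝ) :
    ∑ i ∈ Icc 1 k, F (k+1-i) = ∑ i ∈ Icc 1 k, F i := by
  refine Finset.sum_nbij' (fun i => k+1-i) (fun i => k+1-i)
    (fun a ha => ?_) (fun a ha => ?_) (fun a ha => ?_) (fun a ha => ?_) (fun a ha => rfl) <;>
  · simp only [mem_Icc] at *; omega

/-- residual of the order-`k` prediction at lag `j` -/
noncomputable def arRes (ζ : ℕ → ℝ) (γ : ℤ → ℝ) (k : ℕ) (j : ℤ) : ℝ :=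
  γ j - ∑ i ∈ Icc 1 k, levinson ζ k i * γ (j - i)

lemma arRes_rec (ζ : ℕ → ℝ) (γ : ℤ → ℝ) (hsym : ∀ k : ℤ, γ (-k) = γ k) (k : ℕ) (j : ℤ) :
    arRes ζ γ (k+1) j + ζ (k+1) * arRes ζ γ (k+1) ((k:ℤ)+1 - j)
      = (1 - ζ (k+1)^2) * arRes ζ γ k j := by
  have hsplit : ∀ c : ℤ, ∑ i ∈ Icc 1 (k+1), levinson ζ (k+1) i * γ (c - i)
      = (∑ i ∈ Icc 1 k, levinson ζ k i * γ (c - i))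
        - ζ (k+1) * (∑ i ∈ Icc 1 k, levinson ζ k i * γ (c - ((k:ℤ)+1) + i))
        + ζ (k+1) * γ (c - ((k:ℤ)+1)) := by
    intro c
    rw [Finset.sum_Icc_succ_top (by omega : 1 ≤ k + 1), levinson_succ_self]
    have h1 : ∀ i ∈ Icc 1 k, levinson ζ (k+1) i * γ (c - i)
        = levinson ζ k i * γ (c-i) - ζ (k+1) * (levinson ζ k (k+1-i) * γ (c - i)) := by
      intro i hi; simp only [mem_Icc] at hi
      rw [levinson_succ_of_le ζ hi.2]; ring
    rw [Finset.sum_congr rfl h1, Finset.sum_sub_distrib, ← Finset.mul_sum]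
    have h2 : ∑ i ∈ Icc 1 k, levinson ζ k (k+1-i) * γ (c - i)
        = ∑ i ∈ Icc 1 k, levinson ζ k i * γ (c - ((k:ℤ)+1) + i) := by
      rw [← sum_Icc_reflect k (fun m => levinson ζ k m * γ (c - ((k:ℤ)+1) + m))]
      refine Finset.sum_congr rfl fun i hi => ?_
      simp only [mem_Icc] at hi
      congr 1
      have hc : ((k+1-i : ℕ):ℤ) = (k:ℤ)+1-i := by omega
      rw [hc]; ring
    rw [h2]
    push_cast
    ring_nf
  have e1 := hsplit j
  have e2 := hsplit ((k:ℤ)+1-j)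
  -- rewrite the symmetric terms in e2
  have s1 : ∑ i ∈ Icc 1 k, levinson ζ k i * γ ((k:ℤ)+1-j - ((k:ℤ)+1) + i)
      = ∑ i ∈ Icc 1 k, levinson ζ k i * γ (j - i) := by
    refine Finset.sum_congr rfl fun i hi => ?_
    congr 1
    rw [← hsym (j - i)]; congr 1; ring
  have s2 : γ ((k:ℤ)+1-j - ((k:ℤ)+1)) = γ j := by
    rw [← hsym j]; congr 1; ring
  have s3 : ∑ i ∈ Icc 1 (k+1), levinson ζ (k+1) i * γ (((k:ℤ)+1-j) - i)
      = ∑ i ∈ Icc 1 (k+1), levinson ζ (k+1) i * γ ((j - ((k:ℤ)+1)) + i) := by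
    refine Finset.sum_congr rfl fun i hi => ?_
    congr 1
    rw [← hsym ((j - ((k:ℤ)+1)) + i)]; congr 1; ring
  have s4 : γ ((k:ℤ)+1-j) = γ (j - ((k:ℤ)+1)) := by
    rw [← hsym (j - ((k:ℤ)+1))]; congr 1; ring
  have s5 : ∑ i ∈ Icc 1 k, levinson ζ k i * γ ((k:ℤ)+1-j - i)
      = ∑ i ∈ Icc 1 k, levinson ζ k i * γ (j - ((k:ℤ)+1) + i) := by
    refine Finset.sum_congr rfl fun i hi => ?_
    congr 1
    rw [← hsym (j - ((k:ℤ)+1) + i)]; congr 1; ring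
  rw [s1, s2, s5] at e2
  simp only [arRes]
  rw [e1, e2, s4]
  ring

section
variable (p : ℕ) (ζ : ℕ → ℝ) (γ : ℤ → ℝ)

lemma arRes_zero (hζ' : ∀ i, 1 ≤ i → i ≤ p → 1 - ζ i ^ 2 ≠ 0)
    (hsym : ∀ k : ℤ, γ (-k) = γ k)
    (hYW : ∀ k : ℕ, 1 ≤ k →
      γ k = ∑ j ∈ Icc 1 p, levinson ζ p j * γ ((k : ℤ) - (j : ℤ))) :
    ∀ d k, k + d = p → ∀ j : ℤ, 1 ≤ j → j ≤ (k:ℤ) → arRes ζ γ k j = 0 := by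
  intro d
  induction d with
  | zero =>
    intro k hk j h1 h2
    have hk' : k = p := by omega
    subst hk'
    have hj : j = ((j.toNat : ℕ) : ℤ) := by omega
    rw [arRes, hj, hYW j.toNat (by omega)]
    ring
  | succ d ih =>
    intro k hk j h1 h2
    have h3 := arRes_rec ζ γ hsym k j
    have z1 : arRes ζ γ (k+1) j = 0 := ih (k+1) (by omega) j h1 (by push_cast; omega)
    have z2 : arRes ζ γ (k+1) ((k:ℤ)+1-j) = 0 :=
      ih (k+1) (by omega) _ (by omega) (by push_cast; omega)
    rw [z1, z2] at h3
    have hnz : 1 - ζ (k+1) ^ 2 ≠ 0 := hζ' (k+1) (by omega) (by omega)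
    have : (1 - ζ (k+1)^2) * arRes ζ γ k j = 0 := by linarith
    exact (mul_eq_zero.mp this).resolve_left hnz

lemma arRes_var (σ2 : ℝ) (hζ' : ∀ i, 1 ≤ i → i ≤ p → 1 - ζ i ^ 2 ≠ 0)
    (hsym : ∀ k : ℤ, γ (-k) = γ k)
    (hYW : ∀ k : ℕ, 1 ≤ k →
      γ k = ∑ j ∈ Icc 1 p, levinson ζ p j * γ ((k : ℤ) - (j : ℤ)))
    (hγ0 : γ 0 = (∑ j ∈ Icc 1 p, levinson ζ p j * γ (j : ℤ)) + σ2) :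
    ∀ d k, k + d = p → (∏ i ∈ Icc (k+1) p, (1 - ζ i ^ 2)) * arRes ζ γ k 0 = σ2 := by
  intro d
  induction d with
  | zero =>
    intro k hk
    have hk' : k = p := by omega
    subst hk'
    rw [Finset.Icc_eq_empty (by omega), Finset.prod_empty, one_mul, arRes]
    have : ∀ i ∈ Icc 1 k, levinson ζ k i * γ ((0:ℤ) - i) = levinson ζ k i * γ (i:ℤ) := by
      intro i hi
      congr 1
      rw [← hsym (i:ℤ)]; congr 1; ring
    rw [Finset.sum_congr rfl this, hγ0]; ring
  | succ d ih =>
    intro k hk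
    have h3 := arRes_rec ζ γ hsym k 0
    have z2 : arRes ζ γ (k+1) ((k:ℤ)+1-0) = 0 :=
      arRes_zero p ζ γ hζ' hsym hYW d (k+1) (by omega) _ (by omega) (by push_cast; omega)
    rw [z2] at h3
    have hins : Icc (k+1) p = insert (k+1) (Icc (k+2) p) := by
      ext x; simp only [mem_Icc, mem_insert]; omega
    rw [hins, Finset.prod_insert (by simp)]
    have := ih (k+1) (by omega)
    calc (1 - ζ (k+1)^2) * (∏ i ∈ Icc (k+1+1) p, (1 - ζ i ^ 2)) * arRes ζ γ k 0
        = (∏ i ∈ Icc (k+1+1) p, (1 - ζ i ^ 2)) * ((1 - ζ (k+1)^2) * arRes ζ γ k 0) := by ring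
      _ = (∏ i ∈ Icc (k+1+1) p, (1 - ζ i ^ 2)) * arRes ζ γ (k+1) 0 := by rw [← h3]; ring
      _ = σ2 := this

end

/-- entries of the unit lower-triangular prediction matrix -/
noncomputable def lmat (ζ : ℕ → ℝ) (a c : ℕ) : ℝ :=
  if c = a then 1 else if c < a then -(levinson ζ a (a-c)) else 0

lemma lmat_rowsum (ζ : ℕ → ℝ) (γ : ℤ → ℝ) (a b n : ℕ) (han : a < n) :
    ∑ c ∈ range n, lmat ζ a c * γ ((c:ℤ) - b) = arRes ζ γ a ((a:ℤ) - b) := by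
  have hsub : range (a+1) ⊆ range n := Finset.range_subset_range.mpr (by omega)
  have hz : ∀ c ∈ range n, c ∉ range (a+1) → lmat ζ a c * γ ((c:ℤ) - b) = 0 := by
    intro c _ hc
    simp only [mem_range] at hc
    rw [lmat, if_neg (by omega), if_neg (by omega), zero_mul]
  rw [← Finset.sum_subset hsub hz, Finset.sum_range_succ]
  have hlast : lmat ζ a a * γ ((a:ℤ) - b) = γ ((a:ℤ) - b) := by
    rw [lmat, if_pos rfl, one_mul]
  have hrest : ∑ c ∈ range a, lmat ζ a c * γ ((c:ℤ) - b)
      = -∑ i ∈ Icc 1 a, levinson ζ a i * γ ((a:ℤ) - b - i) := by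
    rw [← Finset.sum_neg_distrib]
    refine Finset.sum_nbij' (fun c => a - c) (fun i => a - i)
      (fun c hc => ?_) (fun i hi => ?_) (fun c hc => ?_) (fun i hi => ?_) (fun c hc => ?_)
    · simp only [mem_range, mem_Icc] at *; omega
    · simp only [mem_range, mem_Icc] at *; omega
    · simp only [mem_range] at hc; show a - (a - c) = c; omega
    · simp only [mem_Icc] at hi; show a - (a - i) = i; omega
    · simp only [mem_range] at hc
      rw [lmat, if_neg (by omega), if_pos (by omega)]
      have h1 : ((a - c : ℕ) : ℤ) = (a:ℤ) - c := by omega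
      rw [h1]
      have h2 : (a:ℤ) - (b:ℤ) - ((a:ℤ) - (c:ℤ)) = (c:ℤ) - b := by ring
      rw [h2]
      ring
  rw [hlast, hrest, arRes]
  ring

lemma det_Gamma (p : ℕ) (ζ : ℕ → ℝ) (γ : ℤ → ℝ)
    (hzero : ∀ k, k ≤ p → ∀ j : ℤ, 1 ≤ j → j ≤ (k:ℤ) → arRes ζ γ k j = 0)
    (hsym : ∀ k : ℤ, γ (-k) = γ k) :
    (Matrix.of fun i j : Fin p => γ ((i : ℤ) - (j : ℤ))).det
      = ∏ a : Fin p, arRes ζ γ (a:ℕ) 0 := by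
  set Γp : Matrix (Fin p) (Fin p) ℝ := Matrix.of fun i j => γ ((i : ℤ) - (j : ℤ)) with hΓ
  set L : Matrix (Fin p) (Fin p) ℝ := Matrix.of fun a c => lmat ζ (a:ℕ) (c:ℕ) with hL
  have hLG : ∀ a b : Fin p, (L * Γp) a b = arRes ζ γ (a:ℕ) ((a:ℤ) - (b:ℕ)) := by
    intro a b
    rw [Matrix.mul_apply, ← lmat_rowsum ζ γ a b p a.isLt,
      ← Fin.sum_univ_eq_sum_range (fun c => lmat ζ (a:ℕ) c * γ ((c:ℤ) - (b:ℕ)))]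
    rfl
  have hM : ∀ a b : Fin p, (b:ℕ) ≤ (a:ℕ) →
      (L * Γp * L.transpose) a b = if a = b then arRes ζ γ (a:ℕ) 0 else 0 := by
    intro a b hba
    rw [Matrix.mul_apply]
    by_cases hab : a = b
    · subst hab
      rw [if_pos rfl]
      rw [Finset.sum_eq_single a]
      · rw [hLG, Matrix.transpose_apply, hL, Matrix.of_apply, lmat, if_pos rfl, mul_one]
        norm_num
      · intro d _ hd
        rcases lt_or_ge (d:ℕ) (a:ℕ) with h | h
        · rw [hLG]
          rw [hzero a (by omega) _ (by omega) (by omega), zero_mul]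
        · have hda : (a:ℕ) < (d:ℕ) := by
            rcases h.lt_or_eq with h' | h'
            · exact h'
            · exact absurd (Fin.ext h'.symm) hd
          rw [Matrix.transpose_apply, hL, Matrix.of_apply, lmat,
            if_neg (by omega), if_neg (by omega), mul_zero]
      · intro h; exact absurd (Finset.mem_univ a) h
    · rw [if_neg hab]
      apply Finset.sum_eq_zero
      intro d _
      have hba' : (b:ℕ) < (a:ℕ) := by
        rcases hba.lt_or_eq with h' | h'
        · exact h'
        · exact absurd (Fin.ext h'.symm) hab
      rcases le_or_gt (d:ℕ) (b:ℕ) with h | h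
      · rw [hLG, hzero a (by omega) _ (by omega) (by omega), zero_mul]
      · rw [Matrix.transpose_apply, hL, Matrix.of_apply, lmat,
          if_neg (by omega), if_neg (by omega), mul_zero]
  have hΓsym : Γp.transpose = Γp := by
    ext i j
    rw [Matrix.transpose_apply, hΓ, Matrix.of_apply, Matrix.of_apply, ← hsym ((i:ℤ) - (j:ℤ))]
    congr 1; ring
  have hsymM : (L * Γp * L.transpose).transpose = L * Γp * L.transpose := by
    rw [Matrix.transpose_mul, Matrix.transpose_mul, Matrix.transpose_transpose, hΓsym,
      Matrix.mul_assoc]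
  have hdiag : L * Γp * L.transpose = Matrix.diagonal (fun a : Fin p => arRes ζ γ (a:ℕ) 0) := by
    ext a b
    rcases le_or_gt (b:ℕ) (a:ℕ) with h | h
    · rw [hM a b h, Matrix.diagonal]
      by_cases hab : a = b <;> simp [hab]
    · have hne : a ≠ b := by intro he; rw [he] at h; omega
      have := congrFun (congrFun hsymM a) b
      rw [Matrix.transpose_apply] at this
      rw [← this, hM b a h.le, if_neg (Ne.symm hne), Matrix.diagonal_apply_ne _ hne]
  have hdetL : L.det = 1 := by
    have htri : L.BlockTriangular OrderDual.toDual := by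
      intro i j hij
      have : (i:ℕ) < (j:ℕ) := hij
      rw [hL, Matrix.of_apply, lmat, if_neg (by omega), if_neg (by omega)]
    rw [Matrix.det_of_lowerTriangular L htri]
    have : ∀ a : Fin p, L a a = 1 := by
      intro a; rw [hL, Matrix.of_apply, lmat, if_pos rfl]
    simp [this]
  have hdetLT : L.transpose.det = 1 := by rw [Matrix.det_transpose]; exact hdetL
  have := congrArg Matrix.det hdiag
  rw [Matrix.det_mul, Matrix.det_mul, hdetL, hdetLT, one_mul, mul_one,
    Matrix.det_diagonal] at this
  exact this

/-- Barndorff-Nielsen–Schou determinant formula: for a causal stationary AR(p)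
process with partial autocorrelations `ζ₁,…,ζ_p ∈ (-1,1)`, AR coefficients
`φ_j = levinson ζ p j`, autocovariance function `γ` (symmetric, satisfying the
Yule-Walker equations) and innovation variance `σ²`, the determinant of the
normalized covariance matrix `Γ_p/σ²` equals `∏_{i=1}^p (1-ζ_i²)^{-i}`. -/
theorem det_normalized_covariance (p : ℕ) (σ2 : ℝ) (hσ : 0 < σ2)
    (ζ : ℕ → ℝ) (hζ : ∀ i, 1 ≤ i → i ≤ p → ζ i ∈ Set.Ioo (-1 : ℝ) 1)
    (γ : ℤ → ℝ)
    (hsym : ∀ k : ℤ, γ (-k) = γ k)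
    (hYW : ∀ k : ℕ, 1 ≤ k →
      γ k = ∑ j ∈ Icc 1 p, levinson ζ p j * γ ((k : ℤ) - (j : ℤ)))
    (hγ0 : γ 0 = (∑ j ∈ Icc 1 p, levinson ζ p j * γ (j : ℤ)) + σ2) :
    let Γp : Matrix (Fin p) (Fin p) ℝ :=
      Matrix.of fun i j => γ ((i : ℤ) - (j : ℤ))
    (σ2⁻¹ • Γp).det = ∏ i ∈ Icc 1 p, (1 - ζ i ^ 2) ^ (-(i : ℤ)) := by
  intro Γp
  have hζ' : ∀ i, 1 ≤ i → i ≤ p → 1 - ζ i ^ 2 ≠ 0 := by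
    intro i h1 h2
    obtain ⟨ha, hb⟩ := hζ i h1 h2
    nlinarith
  have hzero : ∀ k, k ≤ p → ∀ j : ℤ, 1 ≤ j → j ≤ (k:ℤ) → arRes ζ γ k j = 0 :=
    fun k hk => arRes_zero p ζ γ hζ' hsym hYW (p - k) k (by omega)
  have hdet : Γp.det = ∏ a : Fin p, arRes ζ γ (a:ℕ) 0 := det_Gamma p ζ γ hzero hsym
  have hval : ∀ a : Fin p, arRes ζ γ (a:ℕ) 0
      = σ2 * (∏ i ∈ Icc ((a:ℕ)+1) p, (1 - ζ i ^ 2))⁻¹ := by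
    intro a
    have hvar := arRes_var p ζ γ σ2 hζ' hsym hYW hγ0 (p - (a:ℕ)) (a:ℕ) (by omega)
    have hP : (∏ i ∈ Icc ((a:ℕ)+1) p, (1 - ζ i ^ 2)) ≠ 0 := by
      rw [Finset.prod_ne_zero_iff]
      intro i hi
      simp only [mem_Icc] at hi
      exact hζ' i (by omega) hi.2
    field_simp
    linarith [hvar]
  rw [Matrix.det_smul, hdet, Finset.prod_congr rfl (fun a _ => hval a),
    Finset.prod_mul_distrib, Finset.prod_const, Finset.card_univ, Fintype.card_fin]
  have hσ' : σ2 ≠ 0 := ne_of_gt hσ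
  rw [← mul_assoc, ← mul_pow, inv_mul_cancel₀ hσ', one_pow, one_mul]
  rw [Fin.prod_univ_eq_prod_range (fun a => (∏ i ∈ Icc (a+1) p, (1 - ζ i ^ 2))⁻¹) p]
  have hswap : ∏ a ∈ range p, ∏ i ∈ Icc (a+1) p, (1 - ζ i ^ 2)⁻¹
      = ∏ i ∈ Icc 1 p, ∏ _a ∈ range i, (1 - ζ i ^ 2)⁻¹ := by
    apply Finset.prod_comm'
    intro a i
    simp only [mem_range, mem_Icc]
    omega
  calc ∏ a ∈ range p, (∏ i ∈ Icc (a+1) p, (1 - ζ i ^ 2))⁻¹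
      = ∏ a ∈ range p, ∏ i ∈ Icc (a+1) p, (1 - ζ i ^ 2)⁻¹ := by
        refine Finset.prod_congr rfl fun a _ => ?_
        rw [Finset.prod_inv_distrib]
    _ = ∏ i ∈ Icc 1 p, ∏ _a ∈ range i, (1 - ζ i ^ 2)⁻¹ := hswap
    _ = ∏ i ∈ Icc 1 p, (1 - ζ i ^ 2) ^ (-(i : ℤ)) := by
        refine Finset.prod_congr rfl fun i _ => ?_
        rw [Finset.prod_const, Finset.card_range, zpow_neg, zpow_natCast, inv_pow]
end

section
/- For a causal stationary AR(p) process with Gaussian innovations of variance σ_a², the determinant of the n×n covariance matrix Γ_n of n ≥ p consecutive observations satisfies det(Γ_n) = σ_a^{2n} · det(Γ_p/σ_a²), i.e. det(Γ_n/σ_a²) = det(Γ_p/σ_a²) for all n ≥ p. -/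
open Finset

lemma step_lemma (p : ℕ) (σ2 : ℝ)
    (φ : ℕ → ℝ) (γ : ℤ → ℝ)
    (hsym : ∀ k : ℤ, γ (-k) = γ k)
    (hYW : ∀ k : ℕ, 1 ≤ k →
      γ k = ∑ j ∈ Icc 1 p, φ j * γ ((k : ℤ) - (j : ℤ)))
    (hγ0 : γ 0 = (∑ j ∈ Icc 1 p, φ j * γ (j : ℤ)) + σ2)
    (n : ℕ) (hn : p ≤ n) :
    (Matrix.of fun i j : Fin (n+1) => γ ((i : ℤ) - (j : ℤ))).det =
    σ2 * (Matrix.of fun i j : Fin n => γ ((i : ℤ) - (j : ℤ))).det := by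
  set A : Matrix (Fin (n+1)) (Fin (n+1)) ℝ :=
    Matrix.of fun i j : Fin (n+1) => γ ((i : ℤ) - (j : ℤ)) with hA
  set e : ℕ → Fin (n+1) := fun k => ⟨n - k, by omega⟩ with he
  set s : Finset (Fin (n+1)) := (Icc 1 p).image e with hs
  set c : Fin (n+1) → ℝ := fun i => -φ (n - (i : ℕ)) with hc
  have hlast : Fin.last n ∉ s := by
    simp only [hs, mem_image, not_exists]
    intro k hk
    obtain ⟨hk1, h⟩ := hk
    have hk2 : 1 ≤ k ∧ k ≤ p := by simpa using hk1
    have := congrArg Fin.val h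
    simp only [he, Fin.last] at this
    omega
  -- the new row
  have hrow : ∀ j : Fin (n+1),
      ((1:ℝ) • A (Fin.last n) + ∑ i ∈ s, c i • A i) j
        = if j = Fin.last n then σ2 else 0 := by
    intro j
    have hsum : ∑ i ∈ s, c i * A i j
        = ∑ k ∈ Icc 1 p, -(φ k * γ ((n : ℤ) - (k : ℤ) - (j : ℤ))) := by
      rw [hs, Finset.sum_image]
      · refine Finset.sum_congr rfl fun k hk => ?_
        have hk1 : 1 ≤ k ∧ k ≤ p := by simpa using hk
        have hv : ((e k : Fin (n+1)) : ℕ) = n - k := rfl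
        have hc' : c (e k) = -φ k := by
          simp only [hc, hv]
          rw [Nat.sub_sub_self (le_trans hk1.2 hn)]
        rw [hc', hA]
        have hcast : (((e k : Fin (n+1)) : ℕ) : ℤ) = (n : ℤ) - (k : ℤ) := by
          rw [hv, Nat.cast_sub (le_trans hk1.2 hn)]
        simp only [Matrix.of_apply, hcast]
        ring
      · intro a ha b hb hab
        have ha1 : 1 ≤ a ∧ a ≤ p := by simpa using ha
        have hb1 : 1 ≤ b ∧ b ≤ p := by simpa using hb
        have := congrArg Fin.val hab
        simp [he] at this
        omega
    simp only [Pi.add_apply, Pi.smul_apply, smul_eq_mul, one_mul, Finset.sum_apply]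
    rw [hsum]
    by_cases hj : j = Fin.last n
    · subst hj
      rw [if_pos rfl]
      have hA0 : A (Fin.last n) (Fin.last n) = γ 0 := by simp [hA]
      rw [hA0, hγ0]
      have hterm : ∀ k ∈ Icc 1 p, -(φ k * γ ((n:ℤ) - (k:ℤ) - ((Fin.last n : Fin (n+1)) : ℕ))) = -(φ k * γ (k:ℤ)) := by
        intro k _
        have h1 : ((n:ℤ) - (k:ℤ) - ((Fin.last n : Fin (n+1)) : ℕ)) = -(k:ℤ) := by
          simp [Fin.last]
        rw [h1, hsym]
      rw [Finset.sum_congr rfl hterm, Finset.sum_neg_distrib]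
      ring
    · have hjn : (j : ℕ) < n := by
        have := j.isLt
        have : (j : ℕ) ≠ n := fun h => hj (Fin.ext (by simp [Fin.last, h]))
        omega
      set m : ℕ := n - (j : ℕ) with hm
      have hm1 : 1 ≤ m := by omega
      have hmz : (((Fin.last n : Fin (n+1)) : ℕ) : ℤ) - ((j : ℕ) : ℤ) = (m : ℤ) := by
        simp only [Fin.val_last, hm, Nat.cast_sub hjn.le]
      have hAval : A (Fin.last n) j = γ (m : ℤ) := by
        rw [hA]; exact congrArg γ hmz
      rw [hAval, hYW m hm1, if_neg hj]
      have hterm : ∀ k ∈ Icc 1 p, -(φ k * γ ((n:ℤ) - (k:ℤ) - ((j:ℕ):ℤ))) = -(φ k * γ ((m:ℤ) - (k:ℤ))) := by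
        intro k _
        have : (n:ℤ) - (k:ℤ) - ((j:ℕ):ℤ) = (m:ℤ) - (k:ℤ) := by omega
        rw [this]
      rw [Finset.sum_congr rfl hterm, Finset.sum_neg_distrib]
      ring
  have hdet := Matrix.det_updateRow_sum_aux A s hlast c 1
  set M := A.updateRow (Fin.last n) ((1:ℝ) • A (Fin.last n) + ∑ i ∈ s, c i • A i) with hM
  rw [one_smul] at hdet
  -- now expand det M along last row
  have hexp : M.det = σ2 * (Matrix.of fun i j : Fin n => γ ((i : ℤ) - (j : ℤ))).det := by
    rw [Matrix.det_succ_row M (Fin.last n)]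
    rw [Finset.sum_eq_single (Fin.last n)]
    · have hMl : M (Fin.last n) (Fin.last n) = σ2 := by
        rw [hM, Matrix.updateRow_self, hrow, if_pos rfl]
      rw [hMl]
      have hsub : M.submatrix (Fin.last n).succAbove (Fin.last n).succAbove
          = Matrix.of fun i j : Fin n => γ ((i : ℤ) - (j : ℤ)) := by
        ext i j
        simp only [Matrix.submatrix_apply, Fin.succAbove_last]
        rw [hM, Matrix.updateRow_ne (Fin.castSucc_lt_last i).ne]
        simp [hA]
      rw [hsub]
      have hpow : (-1 : ℝ) ^ (((Fin.last n : Fin (n+1)) : ℕ) + ((Fin.last n : Fin (n+1)) : ℕ)) = 1 :=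
        Even.neg_one_pow ⟨(Fin.last n : Fin (n+1)), rfl⟩
      rw [hpow]; ring
    · intro j _ hj
      have : M (Fin.last n) j = 0 := by
        rw [hM, Matrix.updateRow_self, hrow, if_neg hj]
      rw [this]; ring
    · intro h; exact absurd (Finset.mem_univ _) h
  rw [← hdet] at *
  rw [hexp]

/-- For a causal stationary AR(p) process with AR coefficients `φ₁,…,φ_p`,
autocovariance function `γ` (symmetric, satisfying the Yule-Walker equations)
and innovation variance `σ²`, the determinant of the `n × n` Toeplitz
autocovariance matrix `Γ_n` satisfies `det(Γ_n/σ²) = det(Γ_p/σ²)` for every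
`n ≥ p`; equivalently `det Γ_n = σ^{2n} det(Γ_p/σ²)`. -/
theorem det_covariance_stabilizes (p : ℕ) (σ2 : ℝ) (hσ : 0 < σ2)
    (φ : ℕ → ℝ) (γ : ℤ → ℝ)
    (hsym : ∀ k : ℤ, γ (-k) = γ k)
    (hYW : ∀ k : ℕ, 1 ≤ k →
      γ k = ∑ j ∈ Icc 1 p, φ j * γ ((k : ℤ) - (j : ℤ)))
    (hγ0 : γ 0 = (∑ j ∈ Icc 1 p, φ j * γ (j : ℤ)) + σ2) :
    ∀ n : ℕ, p ≤ n →
      (σ2⁻¹ • (Matrix.of fun i j : Fin n => γ ((i : ℤ) - (j : ℤ)))).det =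
      (σ2⁻¹ • (Matrix.of fun i j : Fin p => γ ((i : ℤ) - (j : ℤ)))).det := by
  intro n hn
  induction n, hn using Nat.le_induction with
  | base => rfl
  | succ n hn ih =>
    rw [Matrix.det_smul, Matrix.det_smul] at ih ⊢
    rw [step_lemma p σ2 φ γ hsym hYW hγ0 n hn]
    simp only [Fintype.card_fin] at ih ⊢
    rw [← ih]
    have hne : σ2 ≠ 0 := ne_of_gt hσ
    field_simp
    rw [pow_succ', one_div, mul_inv_cancel_left₀ hne, mul_comm]
end

section
/- The Durbin-Levinson map B restricted to the open cube (−1,1)^p has everywhere invertible Jacobian; its Jacobian determinant equals ∏_{k=2}^{p} det(J_{k−1}) where each factor is a product of terms (1 − ζ_k²) and (1 − ζ_k) and hence is nonzero for ζ ∈ (−1,1)^p. -/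
open Finset

lemma levinson_update_of_gt (ζ : ℕ → ℝ) (m : ℕ) (t : ℝ) :
    ∀ k, k < m → ∀ j, levinson (Function.update ζ m t) k j = levinson ζ k j := by
  intro k
  induction k with
  | zero => intro _ j; simp [levinson]
  | succ k ih =>
    intro hk j
    have h1 : m ≠ k + 1 := by omega
    simp only [levinson, Function.update_of_ne (Ne.symm h1), ih (by omega)]

lemma update_apply_fun (ζ : ℕ → ℝ) (m a : ℕ) :
    (fun t => Function.update ζ m t a) = if a = m then (fun t : ℝ => t) else (fun _ => ζ a) := by
  funext t
  simp only [Function.update_apply]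
  split_ifs <;> rfl

lemma update_fun_differentiable (ζ : ℕ → ℝ) (m a : ℕ) :
    Differentiable ℝ (fun t => Function.update ζ m t a) := by
  rw [update_apply_fun]
  split_ifs
  · exact differentiable_id
  · exact differentiable_const _

lemma levinson_differentiable (ζ : ℕ → ℝ) (m : ℕ) :
    ∀ k j, Differentiable ℝ (fun t => levinson (Function.update ζ m t) k j) := by
  intro k
  induction k with
  | zero => intro j; simpa [levinson] using differentiable_const (0 : ℝ)
  | succ k ih =>
    intro j
    by_cases h : j = k + 1
    · subst h
      have he : (fun t => levinson (Function.update ζ m t) (k + 1) (k + 1))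
          = fun t => Function.update ζ m t (k + 1) := by
        funext t; simp [levinson]
      rw [he]
      exact update_fun_differentiable ζ m (k + 1)
    · have he : (fun t => levinson (Function.update ζ m t) (k + 1) j)
          = fun t => levinson (Function.update ζ m t) k j
            - Function.update ζ m t (k + 1) * levinson (Function.update ζ m t) k (k + 1 - j) := by
        funext t; simp [levinson, h]
      rw [he]
      exact (ih j).sub ((update_fun_differentiable ζ m (k + 1)).mul (ih (k + 1 - j)))

/-- Partial derivative of `levinson` with respect to the `m`-th coordinate. -/
noncomputable def dlev (ζ : ℕ → ℝ) (k j m : ℕ) : ℝ :=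
  deriv (fun t => levinson (Function.update ζ m t) k j) (ζ m)

lemma deriv_updateFun (ζ : ℕ → ℝ) (m a : ℕ) (s : ℝ) :
    deriv (fun t => Function.update ζ m t a) s = if m = a then 1 else 0 := by
  rw [update_apply_fun]
  rcases eq_or_ne m a with h | h
  · simp [h, deriv_id]
  · rw [if_neg h]; simp [Ne.symm h]

lemma dlev_zero (ζ : ℕ → ℝ) (j m : ℕ) : dlev ζ 0 j m = 0 := by
  simp [dlev, levinson]

lemma dlev_diag (ζ : ℕ → ℝ) (k m : ℕ) :
    dlev ζ (k + 1) (k + 1) m = if m = k + 1 then 1 else 0 := by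
  have he : (fun t => levinson (Function.update ζ m t) (k + 1) (k + 1))
      = fun t => Function.update ζ m t (k + 1) := by
    funext t; simp [levinson]
  rw [dlev, he, deriv_updateFun]

lemma dlev_succ (ζ : ℕ → ℝ) (m k j : ℕ) (h : j ≠ k + 1) :
    dlev ζ (k + 1) j m = dlev ζ k j m - ζ (k + 1) * dlev ζ k (k + 1 - j) m
      - (if m = k + 1 then levinson ζ k (k + 1 - j) else 0) := by
  have he : (fun t => levinson (Function.update ζ m t) (k + 1) j)
      = fun t => levinson (Function.update ζ m t) k j
        - (fun t => Function.update ζ m t (k + 1)) t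
          * (fun t => levinson (Function.update ζ m t) k (k + 1 - j)) t := by
    funext t; simp [levinson, h]
  have hval : Function.update ζ m (ζ m) = ζ := Function.update_eq_self m ζ
  rw [dlev, he, deriv_fun_sub ((levinson_differentiable ζ m k j) (ζ m))
      (((update_fun_differentiable ζ m (k + 1)) (ζ m)).fun_mul
        ((levinson_differentiable ζ m k (k + 1 - j)) (ζ m))),
    deriv_fun_mul ((update_fun_differentiable ζ m (k + 1)) (ζ m))
      ((levinson_differentiable ζ m k (k + 1 - j)) (ζ m)),
    deriv_updateFun]
  simp only [hval]
  rw [dlev, dlev]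
  split_ifs <;> ring

lemma dlev_of_gt (ζ : ℕ → ℝ) (k j m : ℕ) (h : k < m) : dlev ζ k j m = 0 := by
  have he : (fun t => levinson (Function.update ζ m t) k j) = fun _ => levinson ζ k j := by
    funext t; exact levinson_update_of_gt ζ m t k h j
  rw [dlev, he, deriv_const]

/-- The Jacobian matrix of the Durbin–Levinson map at stage `p`. -/
noncomputable def levMat (ζ : ℕ → ℝ) (p : ℕ) : Matrix (Fin p) (Fin p) ℝ :=
  Matrix.of fun i j => dlev ζ p ((i : ℕ) + 1) ((j : ℕ) + 1)

/-- `1 - c • R` where `R` is the reversal matrix. -/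
def revMat (c : ℝ) (n : ℕ) : Matrix (Fin n) (Fin n) ℝ :=
  Matrix.of fun i j => (if i = j then 1 else 0) - c * (if j = Fin.rev i then 1 else 0)

def halfEquiv (n : ℕ) : (Fin (n / 2) ⊕ Fin (n - n / 2)) ≃ Fin n where
  toFun := Sum.elim (fun i => ⟨i, by have := i.2; omega⟩) (fun j => ⟨n - 1 - j, by have := j.2; omega⟩)
  invFun x :=
    if h : (x : ℕ) < n / 2 then .inl ⟨x, h⟩ else .inr ⟨n - 1 - x, by have := x.2; omega⟩
  left_inv x := by
    match x with
    | .inl i =>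
      have hi := i.2
      simp only [Sum.elim_inl]
      exact dif_pos hi
    | .inr j =>
      have hj := j.2
      simp only [Sum.elim_inr]
      refine (dif_neg (show ¬ n - 1 - (j : ℕ) < n / 2 by omega)).trans ?_
      refine congrArg Sum.inr (Fin.ext ?_)
      show n - 1 - (n - 1 - (j : ℕ)) = (j : ℕ)
      omega
  right_inv x := by
    have hx := x.2
    dsimp only
    by_cases h : (x : ℕ) < n / 2
    · rw [dif_pos h]
      exact rfl
    · rw [dif_neg h]
      refine Fin.ext ?_
      show n - 1 - (n - 1 - (x : ℕ)) = (x : ℕ)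
      omega

lemma det_revMat (c : ℝ) (n : ℕ) :
    (revMat c n).det = (1 - c ^ 2) ^ (n / 2) * (1 - c) ^ (n % 2) := by
  have hdet := Matrix.det_submatrix_equiv_self (halfEquiv n) (revMat c n)
  set B : Matrix (Fin (n / 2)) (Fin (n - n / 2)) ℝ :=
    Matrix.of (fun i j => if (i : ℕ) = (j : ℕ) then -c else 0) with hB
  set C : Matrix (Fin (n - n / 2)) (Fin (n / 2)) ℝ :=
    Matrix.of (fun i j => if (i : ℕ) = (j : ℕ) then -c else 0) with hC
  set D : Matrix (Fin (n - n / 2)) (Fin (n - n / 2)) ℝ :=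
    Matrix.of (fun i j =>
      (if i = j then 1 else 0) - c * (if (i : ℕ) + (j : ℕ) = n - 1 then 1 else 0)) with hD
  have hsub : (revMat c n).submatrix (halfEquiv n) (halfEquiv n) = Matrix.fromBlocks 1 B C D := by
    ext i j
    cases i with
    | inl i =>
      cases j with
      | inl j =>
        have hi := i.2; have hj := j.2
        simp only [Matrix.submatrix_apply, halfEquiv, Equiv.coe_fn_mk, Sum.elim_inl,
          Matrix.fromBlocks_apply₁₁, revMat, Matrix.of_apply, Matrix.one_apply,
          Fin.ext_iff, Fin.val_rev]
        rw [if_neg (show ¬ ((j : ℕ) = n - ((i : ℕ) + 1)) by omega)]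
        split_ifs <;> simp_all <;> omega
      | inr j =>
        have hi := i.2; have hj := j.2
        simp only [Matrix.submatrix_apply, halfEquiv, Equiv.coe_fn_mk, Sum.elim_inl,
          Sum.elim_inr, Matrix.fromBlocks_apply₁₂, revMat, Matrix.of_apply, hB,
          Fin.ext_iff, Fin.val_rev]
        rw [if_neg (show ¬ ((i : ℕ) = n - 1 - (j : ℕ)) by omega)]
        rcases eq_or_ne ((i : ℕ)) ((j : ℕ)) with h | h
        · rw [if_pos (show n - 1 - (j : ℕ) = n - ((i : ℕ) + 1) by omega), if_pos h]; ring
        · rw [if_neg (show ¬ (n - 1 - (j : ℕ) = n - ((i : ℕ) + 1)) by omega), if_neg h]; ring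
    | inr i =>
      cases j with
      | inl j =>
        have hi := i.2; have hj := j.2
        simp only [Matrix.submatrix_apply, halfEquiv, Equiv.coe_fn_mk, Sum.elim_inl,
          Sum.elim_inr, Matrix.fromBlocks_apply₂₁, revMat, Matrix.of_apply, hC,
          Fin.ext_iff, Fin.val_rev]
        rw [if_neg (show ¬ ((n - 1 - (i : ℕ)) = (j : ℕ)) by omega)]
        rcases eq_or_ne ((i : ℕ)) ((j : ℕ)) with h | h
        · rw [if_pos (show (j : ℕ) = n - ((n - 1 - (i : ℕ)) + 1) by omega), if_pos h]; ring
        · rw [if_neg (show ¬ ((j : ℕ) = n - ((n - 1 - (i : ℕ)) + 1)) by omega), if_neg h]; ring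
      | inr j =>
        have hi := i.2; have hj := j.2
        simp only [Matrix.submatrix_apply, halfEquiv, Equiv.coe_fn_mk, Sum.elim_inr,
          Matrix.fromBlocks_apply₂₂, revMat, Matrix.of_apply, hD, Fin.ext_iff, Fin.val_rev]
        have e1 : ((n - 1 - (i : ℕ)) = (n - 1 - (j : ℕ))) ↔ ((i : ℕ) = (j : ℕ)) := by omega
        have e2 : ((n - 1 - (j : ℕ)) = n - ((n - 1 - (i : ℕ)) + 1)) ↔
            ((i : ℕ) + (j : ℕ) = n - 1) := by omega
        rw [if_congr e1 rfl rfl, if_congr e2 rfl rfl]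
  have hDCB : D - C * B
      = Matrix.diagonal (fun i : Fin (n - n / 2) =>
          if (i : ℕ) < n / 2 then 1 - c ^ 2 else 1 - c) := by
    ext i j
    have hi := i.2; have hj := j.2
    rw [Matrix.sub_apply, Matrix.mul_apply]
    have hsum : ∑ l : Fin (n / 2), C i l * B l j
        = if (i : ℕ) = (j : ℕ) ∧ (i : ℕ) < n / 2 then c ^ 2 else 0 := by
      rcases lt_or_ge ((i : ℕ)) (n / 2) with h | h
      · rw [Finset.sum_eq_single (⟨(i : ℕ), h⟩ : Fin (n / 2))]
        · show (if (i : ℕ) = (i : ℕ) then -c else 0) * (if (i : ℕ) = (j : ℕ) then -c else 0)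
            = if (i : ℕ) = (j : ℕ) ∧ (i : ℕ) < n / 2 then c ^ 2 else 0
          rw [if_pos rfl]
          split_ifs <;> first | ring1 | (exfalso; omega)
        · intro b _ hb
          simp only [hC, Matrix.of_apply]
          rw [if_neg (show ¬ ((i : ℕ) = (b : ℕ)) from fun he => hb (Fin.ext he.symm))]
          ring
        · intro habs; exact absurd (Finset.mem_univ _) habs
      · rw [if_neg (by omega)]
        apply Finset.sum_eq_zero
        intro l _
        simp only [hC, Matrix.of_apply]
        rw [if_neg (show ¬ ((i : ℕ) = (l : ℕ)) by have := l.2; omega)]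
        ring
    rw [hsum, Matrix.diagonal_apply]
    simp only [hD, Matrix.of_apply, Fin.ext_iff]
    split_ifs <;> first | ring1 | (exfalso; omega)
  rw [← hdet, hsub, Matrix.det_fromBlocks_one₁₁, hDCB, Matrix.det_diagonal]
  rw [Fin.prod_univ_eq_prod_range (fun m => if m < n / 2 then 1 - c ^ 2 else 1 - c) (n - n / 2)]
  rw [show n - n / 2 = n / 2 + n % 2 by omega, Finset.prod_range_add]
  congr 1
  · rw [Finset.prod_congr rfl (fun i hi => if_pos (Finset.mem_range.mp hi)),
      Finset.prod_const, Finset.card_range]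
  · rw [Finset.prod_congr rfl (fun i _ => if_neg (by omega)),
      Finset.prod_const, Finset.card_range]

lemma levMat_succ_det (ζ : ℕ → ℝ) (p : ℕ) :
    (levMat ζ (p + 1)).det = (revMat (ζ (p + 1)) p).det * (levMat ζ p).det := by
  have hrow : ∀ j : Fin (p + 1),
      levMat ζ (p + 1) (Fin.last p) j = if j = Fin.last p then 1 else 0 := by
    intro j
    have h0 : levMat ζ (p + 1) (Fin.last p) j = dlev ζ (p + 1) (p + 1) ((j : ℕ) + 1) := rfl
    rw [h0, dlev_diag]
    exact if_congr (by rw [Fin.ext_iff, Fin.val_last]; omega) rfl rfl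
  have hsub : (levMat ζ (p + 1)).submatrix (Fin.last p).succAbove (Fin.last p).succAbove
      = revMat (ζ (p + 1)) p * levMat ζ p := by
    ext i j
    rw [Matrix.submatrix_apply, Fin.succAbove_last]
    have hL : levMat ζ (p + 1) (Fin.castSucc i) (Fin.castSucc j)
        = dlev ζ (p + 1) ((i : ℕ) + 1) ((j : ℕ) + 1) := rfl
    rw [hL, dlev_succ ζ ((j : ℕ) + 1) p ((i : ℕ) + 1) (by have := i.2; omega),
      if_neg (show ¬ ((j : ℕ) + 1 = p + 1) by have := j.2; omega)]
    have hrev : p + 1 - ((i : ℕ) + 1) = ((Fin.rev i : Fin p) : ℕ) + 1 := by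
      have := i.2
      rw [Fin.val_rev]
      omega
    rw [hrev, Matrix.mul_apply]
    have hterm : ∀ l : Fin p, revMat (ζ (p + 1)) p i l * levMat ζ p l j
        = (if i = l then levMat ζ p l j else 0)
          - ζ (p + 1) * (if l = Fin.rev i then levMat ζ p l j else 0) := by
      intro l
      simp only [revMat, Matrix.of_apply]
      split_ifs <;> ring
    rw [Finset.sum_congr rfl (fun l _ => hterm l), Finset.sum_sub_distrib,
      Finset.sum_ite_eq, ← Finset.mul_sum, Finset.sum_ite_eq', if_pos (Finset.mem_univ _),
      if_pos (Finset.mem_univ _), sub_zero]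
    rfl
  rw [Matrix.det_succ_row (levMat ζ (p + 1)) (Fin.last p),
    Finset.sum_eq_single (Fin.last p)]
  · rw [hrow (Fin.last p), if_pos rfl, hsub, Matrix.det_mul, Fin.val_last,
      Even.neg_one_pow (⟨p, rfl⟩ : Even (p + p)), one_mul, one_mul]
  · intro b _ hb
    rw [hrow b, if_neg hb]
    ring
  · intro h
    exact absurd (Finset.mem_univ _) h

lemma levMat_det (ζ : ℕ → ℝ) (p : ℕ) :
    (levMat ζ p).det
      = ∏ k ∈ Icc 2 p, (1 - ζ k ^ 2) ^ ((k - 1) / 2) * (1 - ζ k) ^ ((k - 1) % 2) := by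
  induction p with
  | zero => simp
  | succ p ih =>
    rw [levMat_succ_det, ih, det_revMat]
    rcases Nat.eq_zero_or_pos p with hp | hp
    · subst hp; simp
    · rw [Finset.prod_Icc_succ_top (by omega)]
      have h1 : (p + 1 - 1) / 2 = p / 2 := by omega
      have h2 : (p + 1 - 1) % 2 = p % 2 := by omega
      rw [h1, h2]; ring

/-- The Jacobian of the Durbin-Levinson map `B` on the open cube `(-1,1)^p` is
everywhere invertible: its determinant equals the product over the stages,
`∏_{k=2}^{p} (1 - ζ_k²)^{⌊(k-1)/2⌋} (1 - ζ_k)^{(k-1) mod 2}`, each factor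
being a product of terms `(1 - ζ_k²)` and `(1 - ζ_k)`, and hence is nonzero
for `ζ ∈ (-1,1)^p`. -/
theorem levinson_jacobian_invertible (p : ℕ) (ζ : ℕ → ℝ)
    (hζ : ∀ i, 1 ≤ i → i ≤ p → ζ i ∈ Set.Ioo (-1 : ℝ) 1) :
    let J : Matrix (Fin p) (Fin p) ℝ :=
      Matrix.of fun i j =>
        deriv (fun t => levinson (Function.update ζ ((j : ℕ) + 1) t) p ((i : ℕ) + 1))
          (ζ ((j : ℕ) + 1))
    J.det = (∏ k ∈ Icc 2 p,
        (1 - ζ k ^ 2) ^ ((k - 1) / 2) * (1 - ζ k) ^ ((k - 1) % 2)) ∧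
    J.det ≠ 0 := by
  intro J
  have hJ : J = levMat ζ p := rfl
  rw [hJ, levMat_det]
  refine ⟨rfl, ?_⟩
  rw [Finset.prod_ne_zero_iff]
  intro k hk
  obtain ⟨hk2, hkp⟩ := Finset.mem_Icc.mp hk
  obtain ⟨h1, h2⟩ := hζ k (by omega) hkp
  have ha : (0 : ℝ) < 1 - ζ k ^ 2 := by nlinarith
  have hb : (0 : ℝ) < 1 - ζ k := by linarith
  exact mul_ne_zero (pow_ne_zero _ (ne_of_gt ha)) (pow_ne_zero _ (ne_of_gt hb))
end
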